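/- arXiv:1310.4345 — 2 statements merged into one kernel-verified Lean document; each statement's English description precedes it below -/
import Mathlib

section
/- Let P and Q be two homothetic regular m-gons in R^2 with common center O, Q = λ·P for some λ ∈ (0,1), with corresponding vertices of P and Q joined by segments. Given any line L in the plane, if λ is sufficiently close to 1 (depending only on m), then L intersects the interiors of at most 4 of the m trapezoidal 'ring' regions between P and Q. -/
open scoped RealInnerProductSpace

noncomputable section

abbrev E2 := EuclideanSpace ℝ (Fin 2)

/-!
Let `u j` be the outward unit normal of the `j`-th edge of `P` and `κ = λ ρ cos (π / m)`, where
`ρ` is the circumradius. Trapezoid `j` lies in the half-plane `κ ≤ ⟪x, u j⟫`. A vertex of `P`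
not on edge `j` satisfies `⟪x, u j⟫ ≤ ρ cos (3π / m)`, so once `cos (3π / m) < λ cos (π / m)`
every trapezoid other than `j` and its two neighbours lies in the open half-plane `⟪x, u j⟫ < κ`.
A line meets that half-plane in an interval, so along any line, trapezoid `j` is never met
between two trapezoids that are both non-adjacent to it.

Now order the trapezoids met by a line by where the line meets them. Adjacency of trapezoids is
the `m`-cycle, which has maximal degree `2` and, for `m ≥ 4`, no triangles. Among five
trapezoids met in that order, the second is adjacent to the first (it cannot be adjacent to the
three after it), likewise the fourth to the fifth, and then the middle one closes a triangle
with the first two or with the last two.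
-/

open Function Real

theorem Convex.add_smul_mem_of_le {E : Type*} [AddCommGroup E] [Module ℝ E] {s : Set E}
    (hs : Convex ℝ s) {q d : E} {a b c : ℝ} (ha : q + a • d ∈ s) (hc : q + c • d ∈ s)
    (hab : a ≤ b) (hbc : b ≤ c) : q + b • d ∈ s := by
  have hline : Convex ℝ {t : ℝ | q + t • d ∈ s} := by
    have : {t : ℝ | q + t • d ∈ s} = AffineMap.lineMap q (q + d) ⁻¹' s := by
      ext t
      simp [AffineMap.lineMap_apply_module', add_comm]
    exact this ▸ hs.affine_preimage _
  exact hline.ordConnected.out ha hc ⟨hab, hbc⟩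

lemma Fin.eq_add_one_iff_val {n : ℕ} {u v : Fin (n + 1)} :
    u = v + 1 ↔ u.val = v.val + 1 ∨ (u.val = 0 ∧ v.val = n) := by
  rw [Fin.ext_iff, Fin.val_add_one]
  split_ifs with h <;> simp [Fin.ext_iff] at h <;> omega

namespace SimpleGraph

variable {V : Type*} {G : SimpleGraph V}

lemma not_adj_of_degree_le_two [G.LocallyFinite] [DecidableEq V] (hdeg : ∀ v, G.degree v ≤ 2)
    {v a b c : V} (hab : a ≠ b) (hac : a ≠ c) (hbc : b ≠ c) (ha : G.Adj v a) (hb : G.Adj v b) :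
    ¬ G.Adj v c := by
  intro hc
  have hsub : ({a, b, c} : Finset V) ⊆ G.neighborFinset v := by
    simp [Finset.insert_subset_iff, ha, hb, hc]
  have := (Finset.card_le_card hsub).trans (hdeg v)
  rw [Finset.card_eq_three.mpr ⟨a, b, c, hab, hac, hbc, rfl⟩] at this
  omega

theorem card_le_four_of_adj_of_lt {β : Type*} [LinearOrder β] [G.LocallyFinite]
    (hdeg : ∀ v, G.degree v ≤ 2) (hG : G.CliqueFree 3) (f : V → β) (hf : Injective f)
    (s : Finset V)
    (h : ∀ i ∈ s, ∀ j ∈ s, ∀ k ∈ s, f i < f j → f j < f k → G.Adj i j ∨ G.Adj j k) :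
    s.card ≤ 4 := by
  classical
  let : LinearOrder V := LinearOrder.lift' f hf
  by_contra! h5
  obtain ⟨t, hts, ht⟩ := Finset.exists_subset_card_eq (show 5 ≤ s.card by omega)
  set g := t.orderEmbOfFin ht
  have hmem (x : Fin 5) : g x ∈ s := hts (t.orderEmbOfFin_mem ht x)
  have hlt {x y : Fin 5} (hxy : x < y) : f (g x) < f (g y) := g.strictMono hxy
  have hne {x y : Fin 5} (hxy : x ≠ y) : g x ≠ g y := g.injective.ne hxy
  have hbetween {x y z : Fin 5} (hxy : x < y) (hyz : y < z) :
      G.Adj (g x) (g y) ∨ G.Adj (g y) (g z) :=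
    h _ (hmem x) _ (hmem y) _ (hmem z) (hlt hxy) (hlt hyz)
  have h01 : G.Adj (g 0) (g 1) := by
    by_contra h01
    have h2 := (hbetween (z := 2) (by decide) (by decide)).resolve_left h01
    have h3 := (hbetween (z := 3) (by decide) (by decide)).resolve_left h01
    exact not_adj_of_degree_le_two hdeg (hne (by decide)) (hne (by decide)) (hne (by decide)) h2 h3
      ((hbetween (z := 4) (by decide) (by decide)).resolve_left h01)
  have h34 : G.Adj (g 3) (g 4) := by
    by_contra h34
    have h0 := ((hbetween (x := 0) (by decide) (by decide)).resolve_right h34).symm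
    have h1 := ((hbetween (x := 1) (by decide) (by decide)).resolve_right h34).symm
    exact not_adj_of_degree_le_two hdeg (hne (by decide)) (hne (by decide)) (hne (by decide)) h0 h1
      ((hbetween (x := 2) (by decide) (by decide)).resolve_right h34).symm
  have htriangle {x y z : Fin 5} (hxy : G.Adj (g x) (g y)) (hxz : G.Adj (g x) (g z))
      (hyz : G.Adj (g y) (g z)) : False :=
    hG _ (is3Clique_triple_iff.mpr ⟨hxy, hxz, hyz⟩)
  by_cases h012 : G.Adj (g 0) (g 2) ∧ G.Adj (g 1) (g 2)
  · exact htriangle h01 h012.1 h012.2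
  · obtain ⟨x, hx2, hx⟩ : ∃ x : Fin 5, x < 2 ∧ ¬ G.Adj (g x) (g 2) := by
      rw [not_and_or] at h012
      exact h012.elim (⟨0, by decide, ·⟩) (⟨1, by decide, ·⟩)
    exact htriangle ((hbetween hx2 (show (2 : Fin 5) < 3 by decide)).resolve_left hx)
      ((hbetween hx2 (show (2 : Fin 5) < 4 by decide)).resolve_left hx) h34

lemma cycleGraph_adj_iff_eq_add_one {m : ℕ} [NeZero m] (hm : 2 ≤ m) {i j : Fin m} :
    (cycleGraph m).Adj i j ↔ i = j + 1 ∨ j = i + 1 := by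
  obtain ⟨n, rfl⟩ := Nat.exists_eq_add_of_le' hm
  rw [cycleGraph_adj, sub_eq_iff_eq_add', sub_eq_iff_eq_add']

lemma cycleGraph_degree_le_two (m : ℕ) (v : Fin m) : (cycleGraph m).degree v ≤ 2 := by
  match m, v with
  | 1, v => simp [cycleGraph_one_eq_bot]
  | n + 2, v => exact cycleGraph_degree_two_le ▸ Finset.card_le_two

lemma cycleGraph_cliqueFree_three {m : ℕ} (hm : 4 ≤ m) : (cycleGraph m).CliqueFree 3 := by
  obtain ⟨n, rfl⟩ := Nat.exists_eq_add_of_le' hm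
  intro s hs
  obtain ⟨a, b, c, hab, hac, hbc, rfl⟩ := is3Clique_iff.mp hs
  simp only [cycleGraph_adj_iff_eq_add_one (show 2 ≤ n + 4 by omega), Fin.eq_add_one_iff_val]
    at hab hac hbc
  omega

end SimpleGraph

open SimpleGraph

lemma cos_le_cos_mul_pi_div {m a y : ℝ} (ha : 0 < a) (hay : a ≤ y) (hy : y ≤ 2 * m - a) :
    cos (y * π / m) ≤ cos (a * π / m) := by
  have hm : 0 < m := by linarith
  rcases le_total y m with hym | hmy
  · apply cos_le_cos_of_nonneg_of_le_pi (by positivity)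
    · rw [div_le_iff₀ hm]; nlinarith [pi_pos]
    · gcongr
  · rw [← cos_two_pi_sub, show 2 * π - y * π / m = (2 * m - y) * π / m by field_simp]
    apply cos_le_cos_of_nonneg_of_le_pi (by positivity)
    · rw [div_le_iff₀ hm]; nlinarith [pi_pos]
    · gcongr; linarith

lemma cos_pi_div_pos {m : ℝ} (hm : 2 < m) : 0 < cos (π / m) := by
  have hpos : 0 < π / m := div_pos pi_pos (by linarith)
  apply cos_pos_of_mem_Ioo ⟨by linarith [pi_pos], ?_⟩
  rw [div_lt_div_iff₀ (by linarith) two_pos]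
  nlinarith [pi_pos]

def ringTrapezoid {E : Type*} [AddCommGroup E] [Module ℝ E] {m : ℕ} [NeZero m] (P : Fin m → E)
    (lam : ℝ) (i : Fin m) : Set E :=
  convexHull ℝ {P i, P (i + 1), lam • P i, lam • P (i + 1)}

lemma ringTrapezoid_subset {E : Type*} [AddCommGroup E] [Module ℝ E] {m : ℕ} [NeZero m]
    {P : Fin m → E} {lam : ℝ} {i : Fin m} {s : Set E} (hs : Convex ℝ s)
    (hP : ∀ a, a = i ∨ a = i + 1 → P a ∈ s ∧ lam • P a ∈ s) : ringTrapezoid P lam i ⊆ s := by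
  obtain ⟨h₀, h₀'⟩ := hP i (.inl rfl)
  obtain ⟨h₁, h₁'⟩ := hP (i + 1) (.inr rfl)
  exact convexHull_min (by simp [Set.insert_subset_iff, *]) hs

lemma convex_setOf_le_inner {F : Type*} [NormedAddCommGroup F] [InnerProductSpace ℝ F]
    (u : F) (r : ℝ) : Convex ℝ {x : F | r ≤ ⟪x, u⟫} :=
  convex_halfSpace_ge ((innerₗ F).flip u).isLinear r

lemma convex_setOf_inner_lt {F : Type*} [NormedAddCommGroup F] [InnerProductSpace ℝ F]
    (u : F) (r : ℝ) : Convex ℝ {x : F | ⟪x, u⟫ < r} :=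
  convex_halfSpace_lt ((innerₗ F).flip u).isLinear r

def polarVec (r θ : ℝ) : E2 := (WithLp.equiv 2 (Fin 2 → ℝ)).symm ![r * cos θ, r * sin θ]

lemma inner_polarVec (r θ s ψ : ℝ) :
    ⟪polarVec r θ, polarVec s ψ⟫ = r * s * cos (θ - ψ) := by
  simp [polarVec, PiLp.inner_apply, Fin.sum_univ_two, cos_sub]
  ring

def regularPolygon (m : ℕ) (ρ φ : ℝ) (i : Fin m) : E2 := polarVec ρ (φ + 2 * π * (i : ℕ) / m)

def edgeNormal (m : ℕ) (φ : ℝ) (j : Fin m) : E2 := polarVec 1 (φ + (2 * (j : ℕ) + 1) * π / m)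

section RegularPolygon

variable {m : ℕ} {ρ φ : ℝ}

lemma inner_regularPolygon_edgeNormal (a j : Fin m) :
    ⟪regularPolygon m ρ φ a, edgeNormal m φ j⟫ =
      ρ * cos ((2 * ((a - j : Fin m) : ℕ) - 1) * π / m) := by
  have hm : (m : ℝ) ≠ 0 := by have := a.pos; positivity
  obtain ⟨k, hk⟩ : ∃ k : ℤ, ((a - j : Fin m) : ℕ) = (a : ℝ) - j + k * m := by
    rcases le_or_gt j a with h | h
    · exact ⟨0, by rw [Fin.coe_sub_iff_le.mpr h, Nat.cast_sub (by omega)]; ring⟩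
    · exact ⟨1, by rw [Fin.coe_sub_iff_lt.mpr h, Nat.cast_sub (by omega)]; push_cast; ring⟩
  rw [regularPolygon, edgeNormal, inner_polarVec, hk, mul_one,
    show (2 * ((a : ℝ) - j + k * m) - 1) * π / m
      = φ + 2 * π * (a : ℕ) / m - (φ + (2 * (j : ℕ) + 1) * π / m) + k * (2 * π) by
        field_simp; ring,
    cos_add_int_mul_two_pi]

variable [NeZero m]

lemma inner_regularPolygon_edgeNormal_of_endpoint {a j : Fin m} (h : a = j ∨ a = j + 1) :
    ⟪regularPolygon m ρ φ a, edgeNormal m φ j⟫ = ρ * cos (π / m) := by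
  have hval : ((a - j : Fin m) : ℕ) ≤ 1 := by
    rcases h with rfl | rfl
    · simp
    · rw [add_sub_cancel_left, Fin.val_one']
      exact Nat.mod_le _ _
  rw [inner_regularPolygon_edgeNormal]
  rcases Nat.le_one_iff_eq_zero_or_eq_one.mp hval with h | h <;> norm_num [h, neg_div]

lemma inner_regularPolygon_edgeNormal_le (hρ : 0 ≤ ρ) {a j : Fin m} (h₀ : a ≠ j)
    (h₁ : a ≠ j + 1) :
    ⟪regularPolygon m ρ φ a, edgeNormal m φ j⟫ ≤ ρ * cos (3 * π / m) := by
  have hval : 2 ≤ ((a - j : Fin m) : ℕ) := by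
    by_contra! h
    interval_cases hv : ((a - j : Fin m) : ℕ)
    · exact h₀ (sub_eq_zero.mp (Fin.ext hv))
    · refine h₁ (sub_eq_iff_eq_add'.mp (Fin.ext ?_))
      rw [hv, Fin.val_one', Nat.mod_eq_of_lt]
      have := (a - j).isLt
      omega
  have hlt : ((a - j : Fin m) : ℕ) + 1 ≤ m := (a - j).isLt
  rw [inner_regularPolygon_edgeNormal]
  gcongr
  apply cos_le_cos_mul_pi_div (by norm_num)
  · have : (2 : ℝ) ≤ ((a - j : Fin m) : ℕ) := by exact_mod_cast hval
    linarith
  · have : ((a - j : Fin m) : ℕ) + (1 : ℝ) ≤ m := by exact_mod_cast hlt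
    linarith

lemma ringTrapezoid_subset_le_inner {lam : ℝ} (hlam : lam ≤ 1) (hc : 0 ≤ ρ * cos (π / m))
    (i : Fin m) :
    ringTrapezoid (regularPolygon m ρ φ) lam i ⊆
      {x | lam * (ρ * cos (π / m)) ≤ ⟪x, edgeNormal m φ i⟫} := by
  refine ringTrapezoid_subset (convex_setOf_le_inner _ _) fun a ha => ?_
  simp only [Set.mem_ofPred_eq, real_inner_smul_left,
    inner_regularPolygon_edgeNormal_of_endpoint ha]
  exact ⟨mul_le_of_le_one_left hc hlam, le_rfl⟩

lemma ringTrapezoid_subset_inner_lt (hρ : 0 < ρ) {lam : ℝ} (hlam₀ : 0 < lam)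
    (hlam : cos (3 * π / m) < lam * cos (π / m)) (hcos : cos (3 * π / m) < cos (π / m))
    {i j : Fin m} (hij : i ≠ j) (hi : i ≠ j + 1) (hj : j ≠ i + 1) :
    ringTrapezoid (regularPolygon m ρ φ) lam i ⊆
      {x | ⟪x, edgeNormal m φ j⟫ < lam * (ρ * cos (π / m))} := by
  refine ringTrapezoid_subset (convex_setOf_inner_lt _ _) fun a ha => ?_
  have hle : ⟪regularPolygon m ρ φ a, edgeNormal m φ j⟫ ≤ ρ * cos (3 * π / m) := by
    rcases ha with rfl | rfl
    · exact inner_regularPolygon_edgeNormal_le hρ.le hij hi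
    · exact inner_regularPolygon_edgeNormal_le hρ.le (Ne.symm hj)
        (fun h => hij (add_right_cancel h))
  simp only [Set.mem_ofPred_eq, real_inner_smul_left]
  constructor <;> nlinarith [mul_pos hρ hlam₀]

lemma cycleGraph_adj_of_mem_ringTrapezoid (hm : 3 ≤ m) (hρ : 0 < ρ) {lam : ℝ} (hlam₀ : 0 < lam)
    (hlam₁ : lam ≤ 1) (hlam : cos (3 * π / m) < lam * cos (π / m))
    {q d : E2} {i j k : Fin m} {a b c : ℝ}
    (hi : q + a • d ∈ ringTrapezoid (regularPolygon m ρ φ) lam i)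
    (hj : q + b • d ∈ ringTrapezoid (regularPolygon m ρ φ) lam j)
    (hk : q + c • d ∈ ringTrapezoid (regularPolygon m ρ φ) lam k)
    (hab : a ≤ b) (hbc : b ≤ c) (hij : i ≠ j) (hkj : k ≠ j) :
    (cycleGraph m).Adj i j ∨ (cycleGraph m).Adj j k := by
  by_contra! h
  simp only [cycleGraph_adj_iff_eq_add_one (show 2 ≤ m by omega), not_or] at h
  have hc : 0 < cos (π / m) := cos_pi_div_pos (by exact_mod_cast hm)
  have hcos : cos (3 * π / m) < cos (π / m) :=
    hlam.trans_le (mul_le_of_le_one_left hc.le hlam₁)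
  have hiH := ringTrapezoid_subset_inner_lt hρ hlam₀ hlam hcos hij h.1.1 h.1.2 hi
  have hkH := ringTrapezoid_subset_inner_lt hρ hlam₀ hlam hcos hkj h.2.2 h.2.1 hk
  have hjH : lam * (ρ * cos (π / m)) ≤ ⟪q + b • d, edgeNormal m φ j⟫ :=
    ringTrapezoid_subset_le_inner hlam₁ (mul_nonneg hρ.le hc.le) j hj
  have hbH : ⟪q + b • d, edgeNormal m φ j⟫ < lam * (ρ * cos (π / m)) :=
    (convex_setOf_inner_lt _ _).add_smul_mem_of_le hiH hkH hab hbc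
  exact hbH.not_ge hjH

theorem ncard_setOf_exists_mem_interior_ringTrapezoid_le_four (hm : 4 ≤ m) (hρ : 0 < ρ)
    {lam : ℝ} (hlam₀ : 0 < lam) (hlam₁ : lam ≤ 1) (hlam : cos (3 * π / m) < lam * cos (π / m))
    (q d : E2) :
    {i : Fin m | ∃ t : ℝ, q + t • d ∈ interior (ringTrapezoid (regularPolygon m ρ φ) lam i)}.ncard
      ≤ 4 := by
  classical
  choose! t ht using fun (i : Fin m) (hi : ∃ t : ℝ,
    q + t • d ∈ interior (ringTrapezoid (regularPolygon m ρ φ) lam i)) => hi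
  rw [Set.ncard_eq_toFinset_card']
  refine card_le_four_of_adj_of_lt (cycleGraph_degree_le_two m) (cycleGraph_cliqueFree_three hm)
    (fun i => toLex (t i, i)) (fun i j h => (Prod.ext_iff.mp (toLex.injective h)).2) _ ?_
  intro i hi j hj k hk hij hjk
  simp only [Set.mem_toFinset, Set.mem_ofPred_eq] at hi hj hk
  exact cycleGraph_adj_of_mem_ringTrapezoid (by omega) hρ hlam₀ hlam₁ hlam
    (interior_subset (ht i hi)) (interior_subset (ht j hj)) (interior_subset (ht k hk))
    (Prod.Lex.toLex_lt_toLex'.mp hij).1 (Prod.Lex.toLex_lt_toLex'.mp hjk).1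
    (by rintro rfl; exact hij.false) (by rintro rfl; exact hjk.false)

end RegularPolygon

/-- Let `p 0, …, p (m-1)` be the vertices of a regular `m`-gon (`m ≥ 5`) centered at
the origin (radius `ρ > 0`, phase `φ`), and for `λ ∈ (0,1)` consider the `m` open
trapezoidal "ring" regions between the `m`-gon and its homothetic copy `λ·P`:
the interiors of the convex hulls of `{p i, p (i+1), λ p i, λ p (i+1)}`.
If `λ` is close enough to `1` (depending only on `m`), every straight line meets
the interiors of at most `4` of these ring regions. -/
theorem stmt16 (m : ℕ) [NeZero m] (hm : 5 ≤ m) (ρ φ : ℝ) (hρ : 0 < ρ)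
    (p : Fin m → E2)
    (hp : ∀ i : Fin m, p i = (WithLp.equiv 2 (Fin 2 → ℝ)).symm
      ![ρ * Real.cos (φ + 2 * Real.pi * (i : ℕ) / m),
        ρ * Real.sin (φ + 2 * Real.pi * (i : ℕ) / m)]) :
    ∃ lam0 : ℝ, 0 < lam0 ∧ lam0 < 1 ∧
      ∀ lam : ℝ, lam0 < lam → lam < 1 →
        ∀ q d : E2, d ≠ 0 →
          {i : Fin m | ∃ t : ℝ, q + t • d ∈
            interior (convexHull ℝ
              {p i, p (i + 1), lam • p i, lam • p (i + 1)})}.ncard ≤ 4 := by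
  obtain rfl : p = regularPolygon m ρ φ := funext hp
  have hm' : (5 : ℝ) ≤ m := by exact_mod_cast hm
  have hc : 0 < cos (π / m) := cos_pi_div_pos (by linarith)
  have hcos : cos (3 * π / m) < cos (π / m) := by
    apply cos_lt_cos_of_nonneg_of_le_pi (by positivity)
    · rw [div_le_iff₀ (by linarith)]; nlinarith [pi_pos]
    · gcongr; linarith [pi_pos]
  -- the `1 / 2` only keeps `lam` positive
  refine ⟨max (cos (3 * π / m) / cos (π / m)) (1 / 2), lt_max_of_lt_right (by norm_num),
    max_lt ((div_lt_one hc).2 hcos) (by norm_num), fun lam hlam₀ hlam₁ q d _ => ?_⟩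
  have hlam : cos (3 * π / m) < lam * cos (π / m) :=
    (div_lt_iff₀ hc).1 ((le_max_left _ _).trans_lt hlam₀)
  exact ncard_setOf_exists_mem_interior_ringTrapezoid_le_four (by omega) hρ
    (by linarith [le_max_right (cos (3 * π / m) / cos (π / m)) (1 / 2)]) hlam₁.le hlam q d
end
end

section
/- For a convex polyhedron P in R^3 and a direction u ∈ S^2 that is not orthogonal to the outward normal of any face of P (u non-degenerate), an edge E of P, bounded by faces with outward unit normals v_1 and v_2, projects to an edge on the boundary of the orthogonal projection of P onto u^⊥ if and only if ⟨u, v_1⟩ and ⟨u, v_2⟩ have opposite signs. -/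
open scoped RealInnerProductSpace

noncomputable section

abbrev E3 := EuclideanSpace ℝ (Fin 3)

namespace Sil

open Set Module

def proj (u : E3) : E3 →ₗ[ℝ] E3 where
  toFun x := x - ⟪x, u⟫ • u
  map_add' x y := by
    simp only [inner_add_left, add_smul]; abel
  map_smul' c x := by
    simp only [real_inner_smul_left, RingHom.id_apply, smul_sub, mul_smul]

@[simp] lemma proj_apply (u x : E3) : proj u x = x - ⟪x, u⟫ • u := rfl

lemma proj_neg (u : E3) : proj (-u) = proj u := by
  ext x; simp [proj]

lemma inner_proj (u : E3) (hu : ‖u‖ = 1) (x : E3) : ⟪u, proj u x⟫ = 0 := by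
  have huu : ⟪u, u⟫ = 1 := by
    rw [real_inner_self_eq_norm_sq, hu]; norm_num
  simp only [proj_apply, inner_sub_right, real_inner_smul_right, huu, mul_one,
    real_inner_comm x u, sub_self]

lemma proj_of_orth (u : E3) {d : E3} (hd : ⟪u, d⟫ = 0) : proj u d = d := by
  have h' : ⟪d, u⟫ = 0 := by rw [real_inner_comm]; exact hd
  rw [proj_apply, h', zero_smul, sub_zero]

lemma Ed_nonempty {Ed : Set E3}
    (hEdim : Module.finrank ℝ (affineSpan ℝ Ed).direction = 1) : Ed.Nonempty := by
  rcases Ed.eq_empty_or_nonempty with h | h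
  · rw [h, AffineSubspace.span_empty, AffineSubspace.direction_bot, finrank_bot] at hEdim
    exact absurd hEdim one_ne_zero.symm
  · exact h

theorem bk {n : ℕ} (a : Fin n → E3) (b : Fin n → ℝ)
    (P : Set E3) (hP : P = ⋂ i, {x | ⟪a i, x⟫ ≤ b i})
    (u : E3) (hu : ‖u‖ = 1)
    (i1 i2 : Fin n)
    (h1 : 0 < ⟪u, a i1⟫) (h2 : ⟪u, a i2⟫ < 0)
    (Ed : Set E3)
    (hE : Ed = (P ∩ {x | ⟪a i1, x⟫ = b i1}) ∩ (P ∩ {x | ⟪a i2, x⟫ = b i2}))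
    (hEdim : Module.finrank ℝ (affineSpan ℝ Ed).direction = 1) :
    IsExposed ℝ (⇑(proj u) '' P) (⇑(proj u) '' Ed) ∧
      Module.finrank ℝ (affineSpan ℝ (⇑(proj u) '' Ed)).direction = 1 := by
  have hPmem : ∀ {x : E3}, x ∈ P → ∀ j, ⟪a j, x⟫ ≤ b j := by
    intro x hx j
    rw [hP] at hx
    exact Set.mem_iInter.mp hx j
  have hEne : Ed.Nonempty := Ed_nonempty hEdim
  set t1 : ℝ := (⟪u, a i1⟫)⁻¹ with ht1def
  set t2 : ℝ := -(⟪u, a i2⟫)⁻¹ with ht2def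
  have ht1 : 0 < t1 := inv_pos.mpr h1
  have ht2 : 0 < t2 := by
    rw [ht2def, neg_pos]
    exact inv_lt_zero.mpr h2
  set c : E3 := t1 • a i1 + t2 • a i2 with hcdef
  set β : ℝ := t1 * b i1 + t2 * b i2 with hβdef
  have hc : ∀ x : E3, ⟪c, x⟫ = t1 * ⟪a i1, x⟫ + t2 * ⟪a i2, x⟫ := by
    intro x
    rw [hcdef, inner_add_left, real_inner_smul_left, real_inner_smul_left]
  have hcu : ⟪c, u⟫ = 0 := by
    rw [hc, real_inner_comm u (a i1), real_inner_comm u (a i2), ht1def, ht2def,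
      inv_mul_cancel₀ h1.ne', neg_mul, inv_mul_cancel₀ h2.ne]
    norm_num
  have hproj : ∀ x : E3, ⟪c, proj u x⟫ = ⟪c, x⟫ := by
    intro x
    rw [proj_apply, inner_sub_right, real_inner_smul_right, hcu, mul_zero, sub_zero]
  have hle : ∀ x ∈ P, ⟪c, x⟫ ≤ β := by
    intro x hx
    rw [hc, hβdef]
    exact add_le_add (mul_le_mul_of_nonneg_left (hPmem hx i1) ht1.le)
      (mul_le_mul_of_nonneg_left (hPmem hx i2) ht2.le)
  have hEmem : ∀ {x : E3}, x ∈ Ed → x ∈ P ∧ ⟪a i1, x⟫ = b i1 ∧ ⟪a i2, x⟫ = b i2 := by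
    intro x hx
    rw [hE] at hx
    exact ⟨hx.1.1, hx.1.2, hx.2.2⟩
  have heqEd : ∀ x ∈ P, (⟪c, x⟫ = β ↔ x ∈ Ed) := by
    intro x hx
    constructor
    · intro heq
      rw [hc, hβdef] at heq
      have k1 : t1 * ⟪a i1, x⟫ ≤ t1 * b i1 := mul_le_mul_of_nonneg_left (hPmem hx i1) ht1.le
      have k2 : t2 * ⟪a i2, x⟫ ≤ t2 * b i2 := mul_le_mul_of_nonneg_left (hPmem hx i2) ht2.le
      have e1 : t1 * ⟪a i1, x⟫ = t1 * b i1 := by linarith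
      have e2 : t2 * ⟪a i2, x⟫ = t2 * b i2 := by linarith
      rw [hE]
      exact ⟨⟨hx, mul_left_cancel₀ ht1.ne' e1⟩, hx, mul_left_cancel₀ ht2.ne' e2⟩
    · intro hxE
      obtain ⟨_, e1, e2⟩ := hEmem hxE
      rw [hc, e1, e2, hβdef]
  constructor
  · -- exposedness
    intro _
    refine ⟨innerSL ℝ c, ?_⟩
    ext z
    constructor
    · rintro ⟨x, hxE, rfl⟩
      have hxP : x ∈ P := (hEmem hxE).1
      refine ⟨⟨x, hxP, rfl⟩, ?_⟩
      rintro y ⟨x', hx'P, rfl⟩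
      simp only [innerSL_apply_apply]
      rw [hproj, hproj]
      calc ⟪c, x'⟫ ≤ β := hle x' hx'P
        _ = ⟪c, x⟫ := ((heqEd x hxP).mpr hxE).symm
    · rintro ⟨⟨x, hxP, rfl⟩, hmax⟩
      obtain ⟨e, he⟩ := hEne
      have heP : e ∈ P := (hEmem he).1
      have hβle : β ≤ ⟪c, x⟫ := by
        have h := hmax (proj u e) ⟨e, heP, rfl⟩
        simp only [innerSL_apply_apply] at h
        rw [hproj, hproj] at h
        rw [← (heqEd e heP).mpr he]
        exact h
      have : ⟪c, x⟫ = β := le_antisymm (hle x hxP) hβle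
      exact ⟨x, (heqEd x hxP).mp this, rfl⟩
  · -- dimension
    rw [← LinearMap.coe_toAffineMap, ← AffineSubspace.map_span, AffineSubspace.map_direction,
      LinearMap.toAffineMap_linear]
    set p := (affineSpan ℝ Ed).direction with hpdef
    have hker : ∀ w ∈ p, ⟪a i1, w⟫ = 0 := by
      intro w hw
      rw [hpdef, direction_affineSpan, vectorSpan_def] at hw
      induction hw using Submodule.span_induction with
      | mem x hx =>
        obtain ⟨x1, hx1, x2, hx2, rfl⟩ := Set.mem_vsub.mp hx
        have e1 := (hEmem hx1).2.1
        have e2 := (hEmem hx2).2.1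
        rw [vsub_eq_sub, inner_sub_right, e1, e2, sub_self]
      | zero => rw [inner_zero_right]
      | add x y hx hy ihx ihy => rw [inner_add_right, ihx, ihy, add_zero]
      | smul r x hx ihx => rw [real_inner_smul_right, ihx, mul_zero]
    have hinj : Function.Injective ((proj u).domRestrict p) := by
      rw [← LinearMap.ker_eq_bot, LinearMap.ker_eq_bot']
      rintro ⟨w, hw⟩ h0
      have h0' : proj u w = 0 := h0
      rw [proj_apply, sub_eq_zero] at h0'
      have hw1 : ⟪a i1, w⟫ = 0 := hker w hw
      rw [h0', real_inner_smul_right] at hw1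
      have hwu : ⟪w, u⟫ = 0 := by
        rcases mul_eq_zero.mp hw1 with h | h
        · exact h
        · have h' : ⟪u, a i1⟫ = 0 := by rw [real_inner_comm]; exact h
          exact absurd h' h1.ne'
      have : w = 0 := by rw [h0', hwu, zero_smul]
      exact Subtype.ext this
    have := LinearMap.finrank_range_of_inj hinj
    rw [LinearMap.range_domRestrict] at this
    rw [this, hEdim]

lemma inner_add_add_smul (w m d u' : E3) (t : ℝ) :
    ⟪w, m + (d + t • u')⟫ = ⟪w, m⟫ + ⟪w, d⟫ + t * ⟪w, u'⟫ := by
  rw [inner_add_right, inner_add_right, real_inner_smul_right]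
  ring

set_option maxHeartbeats 1600000 in
theorem fw {n : ℕ} (a : Fin n → E3) (b : Fin n → ℝ) (ha : ∀ i, ‖a i‖ = 1)
    (P : Set E3) (hP : P = ⋂ i, {x | ⟪a i, x⟫ ≤ b i})
    (hint : (interior P).Nonempty)
    (hfacet : ∀ i, Module.finrank ℝ
      (affineSpan ℝ (P ∩ {x | ⟪a i, x⟫ = b i})).direction = 2)
    (u : E3) (hu : ‖u‖ = 1) (hnd : ∀ i, ⟪u, a i⟫ ≠ 0)
    (i1 i2 : Fin n)
    (h1 : 0 < ⟪u, a i1⟫) (h2 : 0 < ⟪u, a i2⟫)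
    (Ed : Set E3)
    (hE : Ed = (P ∩ {x | ⟪a i1, x⟫ = b i1}) ∩ (P ∩ {x | ⟪a i2, x⟫ = b i2}))
    (hEdim : Module.finrank ℝ (affineSpan ℝ Ed).direction = 1)
    (hExp : IsExposed ℝ (⇑(proj u) '' P) (⇑(proj u) '' Ed))
    (hdim : Module.finrank ℝ (affineSpan ℝ (⇑(proj u) '' Ed)).direction = 1) :
    False := by
  classical
  have hPmem : ∀ {x : E3}, x ∈ P → ∀ j, ⟪a j, x⟫ ≤ b j := by
    intro x hx j
    rw [hP] at hx
    exact Set.mem_iInter.mp hx j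
  have hEmem : ∀ {x : E3}, x ∈ Ed → x ∈ P ∧ ⟪a i1, x⟫ = b i1 ∧ ⟪a i2, x⟫ = b i2 := by
    intro x hx
    rw [hE] at hx
    exact ⟨hx.1.1, hx.1.2, hx.2.2⟩
  -- convexity
  have hlin : ∀ j : Fin n, IsLinearMap ℝ (fun x : E3 => ⟪a j, x⟫) :=
    fun j => ⟨fun x y => inner_add_right _ _ _, fun r x => real_inner_smul_right _ _ _⟩
  have hPconv : Convex ℝ P := by
    rw [hP]
    exact convex_iInter fun j => convex_halfSpace_le (hlin j) (b j)
  have hEdconv : Convex ℝ Ed := by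
    rw [hE]
    exact (hPconv.inter (convex_hyperplane (hlin i1) (b i1))).inter
      (hPconv.inter (convex_hyperplane (hlin i2) (b i2)))
  -- two distinct points of Ed
  have h2pts : ∃ x0 ∈ Ed, ∃ x1 ∈ Ed, x0 ≠ x1 := by
    by_contra hcon
    push_neg at hcon
    have hsub : Ed -ᵥ Ed ⊆ ({0} : Set E3) := by
      rintro w hw
      obtain ⟨x1, hx1, x2, hx2, rfl⟩ := Set.mem_vsub.mp hw
      simp [hcon x1 hx1 x2 hx2]
    have hbot : vectorSpan ℝ Ed = ⊥ := by
      rw [vectorSpan_def, ← Submodule.span_empty (R := ℝ) (M := E3)]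
      · rw [Submodule.span_empty]
        refine le_bot_iff.mp ?_
        rw [Submodule.span_le]
        intro w hw
        have := hsub hw
        simp only [Set.mem_singleton_iff] at this
        simp [this]
    rw [direction_affineSpan, hbot, finrank_bot] at hEdim
    exact one_ne_zero hEdim.symm
  obtain ⟨x0, hx0, x1, hx1, hne01⟩ := h2pts
  have hx0P := (hEmem hx0).1
  have hx1P := (hEmem hx1).1
  obtain ⟨m, hmdef⟩ : ∃ m : E3, m = (2⁻¹ : ℝ) • x0 + (2⁻¹ : ℝ) • x1 := ⟨_, rfl⟩
  have hm : m ∈ Ed := by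
    rw [hmdef]
    exact hEdconv hx0 hx1 (by norm_num) (by norm_num) (by norm_num)
  obtain ⟨hmP, hm1, hm2⟩ := hEmem hm
  have hinm : ∀ j, ⟪a j, m⟫ = 2⁻¹ * ⟪a j, x0⟫ + 2⁻¹ * ⟪a j, x1⟫ := by
    intro j
    rw [hmdef, inner_add_right, real_inner_smul_right, real_inner_smul_right]
  have hact : ∀ j, ⟪a j, m⟫ = b j → ⟪a j, x0⟫ = b j ∧ ⟪a j, x1⟫ = b j := by
    intro j hj
    have l0 := hPmem hx0P j
    have l1 := hPmem hx1P j
    have := hinm j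
    constructor <;> linarith
  obtain ⟨v, hvdef⟩ : ∃ v : E3, v = x1 - x0 := ⟨_, rfl⟩
  have hvne : v ≠ 0 := hvdef ▸ sub_ne_zero.mpr (Ne.symm hne01)
  have hv : ∀ j, ⟪a j, m⟫ = b j → ⟪a j, v⟫ = 0 := by
    intro j hj
    obtain ⟨e0, e1⟩ := hact j hj
    rw [hvdef, inner_sub_right, e0, e1, sub_self]
  -- points on each facet off the edge line
  have hoff : ∀ k k' : Fin n,
      Ed = (P ∩ {x | ⟪a k, x⟫ = b k}) ∩ (P ∩ {x | ⟪a k', x⟫ = b k'}) →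
      ∃ p1, p1 ∈ P ∧ ⟪a k, p1⟫ = b k ∧ ⟪a k', p1⟫ < b k' := by
    intro k k' hEkk
    have : ∃ p1, p1 ∈ P ∩ {x | ⟪a k, x⟫ = b k} ∧ p1 ∉ (affineSpan ℝ Ed : Set E3) := by
      by_contra hcon
      push_neg at hcon
      have hle : affineSpan ℝ (P ∩ {x | ⟪a k, x⟫ = b k}) ≤ affineSpan ℝ Ed := by
        rw [affineSpan_le]
        intro x hx
        exact hcon x hx
      have := Submodule.finrank_mono (AffineSubspace.direction_le hle)
      rw [hfacet k, hEdim] at this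
      omega
    obtain ⟨p1, ⟨hp1P, hp1k⟩, hp1notin⟩ := this
    refine ⟨p1, hp1P, hp1k, lt_of_le_of_ne (hPmem hp1P k') fun heq => hp1notin ?_⟩
    refine subset_affineSpan ℝ Ed ?_
    rw [hEkk]
    exact ⟨⟨hp1P, hp1k⟩, hp1P, heq⟩
  obtain ⟨p1, hp1P, hp1e, hp1lt⟩ := hoff i1 i2 hE
  obtain ⟨p2, hp2P, hp2e, hp2lt⟩ := hoff i2 i1 (by rw [hE, Set.inter_comm])
  -- linear independence of the two normals
  have hli : LinearIndependent ℝ ![a i1, a i2] := by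
    rw [LinearIndependent.pair_iff]
    intro s t hst
    have hinner : ⟪s • a i1 + t • a i2, x0 - p2⟫ = 0 := by rw [hst, inner_zero_left]
    rw [inner_add_left, real_inner_smul_left, real_inner_smul_left] at hinner
    have e1 : ⟪a i1, x0 - p2⟫ = b i1 - ⟪a i1, p2⟫ := by
      rw [inner_sub_right, (hEmem hx0).2.1]
    have e2 : ⟪a i2, x0 - p2⟫ = 0 := by
      rw [inner_sub_right, (hEmem hx0).2.2, hp2e, sub_self]
    rw [e1, e2, mul_zero, add_zero] at hinner
    have hs : s = 0 := by
      rcases mul_eq_zero.mp hinner with h | h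
      · exact h
      · exfalso; rw [sub_eq_zero] at h; exact absurd h.symm hp2lt.ne
    refine ⟨hs, ?_⟩
    rw [hs, zero_smul, zero_add] at hst
    rcases smul_eq_zero.mp hst with h | h
    · exact h
    · exfalso
      have := ha i2
      rw [h, norm_zero] at this
      norm_num at this
  -- span {a i1, a i2} is exactly v^⊥
  set W : Submodule ℝ E3 := (ℝ ∙ v)ᗮ with hWdef
  have haW : ∀ j, ⟪a j, v⟫ = 0 → a j ∈ W := by
    intro j hj
    rw [hWdef, Submodule.mem_orthogonal_singleton_iff_inner_right, real_inner_comm]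
    exact hj
  set S : Submodule ℝ E3 := Submodule.span ℝ {a i1, a i2} with hSdef
  have hrange : Set.range ![a i1, a i2] = {a i1, a i2} := by
    simp only [Matrix.range_cons, Matrix.range_empty, Set.union_empty,
      Set.union_singleton]
    exact Set.pair_comm (a i2) (a i1)
  have hS2 : finrank ℝ S = 2 := by
    have hcard := finrank_span_eq_card hli
    rw [hrange] at hcard
    rw [hSdef, hcard]
    simp
  have hW2 : finrank ℝ W = 2 := by
    have h3 := Submodule.finrank_add_finrank_orthogonal (K := (ℝ ∙ v : Submodule ℝ E3))
    rw [finrank_span_singleton hvne, finrank_euclideanSpace_fin] at h3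
    rw [hWdef]
    omega
  have hSle : S ≤ W := by
    rw [hSdef, Submodule.span_le]
    intro w hw
    simp only [Set.mem_insert_iff, Set.mem_singleton_iff] at hw
    rcases hw with rfl | rfl
    · exact haW i1 (hv i1 hm1)
    · exact haW i2 (hv i2 hm2)
  have hSW : S = W := Submodule.eq_of_le_of_finrank_le hSle (by rw [hS2, hW2])
  -- key positivity for active normals
  have key : ∀ j, ⟪a j, m⟫ = b j → 0 < ⟪u, a j⟫ := by
    intro j hj
    have hjW : a j ∈ S := by rw [hSW]; exact haW j (hv j hj)
    obtain ⟨α, β, hab⟩ := Submodule.mem_span_pair.mp hjW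
    have hbj : b j = α * b i1 + β * b i2 := by
      rw [← hj, ← hab, inner_add_left, real_inner_smul_left, real_inner_smul_left, hm1, hm2]
    have hjp1 : ⟪a j, p1⟫ = α * b i1 + β * ⟪a i2, p1⟫ := by
      rw [← hab, inner_add_left, real_inner_smul_left, real_inner_smul_left, hp1e]
    have hjp2 : ⟪a j, p2⟫ = α * ⟪a i1, p2⟫ + β * b i2 := by
      rw [← hab, inner_add_left, real_inner_smul_left, real_inner_smul_left, hp2e]
    have hβ : 0 ≤ β := by
      by_contra hneg
      push_neg at hneg
      have hle := hPmem hp1P j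
      have hmul := mul_lt_mul_of_neg_left hp1lt hneg
      linarith
    have hα : 0 ≤ α := by
      by_contra hneg
      push_neg at hneg
      have hle := hPmem hp2P j
      have hmul := mul_lt_mul_of_neg_left hp2lt hneg
      linarith
    have hua : ⟪u, a j⟫ = α * ⟪u, a i1⟫ + β * ⟪u, a i2⟫ := by
      rw [← hab, inner_add_right, real_inner_smul_right, real_inner_smul_right]
    have hnn : 0 ≤ ⟪u, a j⟫ := by
      rw [hua]
      exact add_nonneg (mul_nonneg hα h1.le) (mul_nonneg hβ h2.le)
    exact lt_of_le_of_ne hnn (Ne.symm (hnd j))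
  -- quantitative constants
  set AS : Finset (Fin n) := Finset.univ.filter (fun j => ⟪a j, m⟫ = b j) with hASdef
  have hASne : AS.Nonempty :=
    ⟨i1, by rw [hASdef, Finset.mem_filter]; exact ⟨Finset.mem_univ i1, hm1⟩⟩
  set μ : ℝ := AS.inf' hASne (fun j => ⟪u, a j⟫) with hμdef
  have hμpos : 0 < μ := by
    rw [hμdef, Finset.lt_inf'_iff]
    intro j hj
    rw [hASdef, Finset.mem_filter] at hj
    exact key j hj.2
  have hμle : ∀ j, ⟪a j, m⟫ = b j → μ ≤ ⟪u, a j⟫ := by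
    intro j hj
    exact Finset.inf'_le _ (by rw [hASdef, Finset.mem_filter]; exact ⟨Finset.mem_univ j, hj⟩)
  set T : Finset (Fin n) := Finset.univ.filter (fun j => ⟪a j, m⟫ < b j) with hTdef
  set δ : ℝ := if hT : T.Nonempty then T.inf' hT (fun j => b j - ⟪a j, m⟫) else 1 with hδdef
  have hδpos : 0 < δ := by
    rw [hδdef]
    split_ifs with hT
    · rw [Finset.lt_inf'_iff]
      intro j hj
      rw [hTdef, Finset.mem_filter] at hj
      linarith [hj.2]
    · norm_num
  have hδle : ∀ j, ⟪a j, m⟫ < b j → δ ≤ b j - ⟪a j, m⟫ := by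
    intro j hj
    have hjT : j ∈ T := by rw [hTdef, Finset.mem_filter]; exact ⟨Finset.mem_univ j, hj⟩
    rw [hδdef, dif_pos ⟨j, hjT⟩]
    exact Finset.inf'_le _ hjT
  set ε : ℝ := δ / (1 + μ⁻¹) with hεdef
  have hfac : (0:ℝ) < 1 + μ⁻¹ := by positivity
  have hεpos : 0 < ε := div_pos hδpos hfac
  have hεδ : ε * (1 + μ⁻¹) = δ := div_mul_cancel₀ δ hfac.ne'
  -- moving inside the shadow
  have hmove : ∀ d : E3, ⟪u, d⟫ = 0 → ‖d‖ < ε → proj u m + d ∈ ⇑(proj u) '' P := by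
    intro d hd hdn
    obtain ⟨t, htdef⟩ : ∃ t : ℝ, t = -(‖d‖ * μ⁻¹) := ⟨_, rfl⟩
    obtain ⟨y, hydef⟩ : ∃ y : E3, y = m + (d + t • u) := ⟨_, rfl⟩
    have hexp : ∀ j, ⟪a j, y⟫ = ⟪a j, m⟫ + ⟪a j, d⟫ + t * ⟪u, a j⟫ := by
      intro j
      rw [hydef, inner_add_add_smul, real_inner_comm u (a j)]
    have hyP : y ∈ P := by
      rw [hP]
      refine Set.mem_iInter.mpr fun j => ?_
      show ⟪a j, y⟫ ≤ b j
      have hda : ⟪a j, d⟫ ≤ ‖d‖ := by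
        have hcs := real_inner_le_norm (a j) d
        rwa [ha j, one_mul] at hcs
      rcases eq_or_lt_of_le (hPmem hmP j) with hj | hj
      · -- active constraint
        have hμj := hμle j hj
        have hkey2 : ‖d‖ ≤ ‖d‖ * μ⁻¹ * ⟪u, a j⟫ := by
          have h0 : 0 ≤ ‖d‖ * μ⁻¹ := by positivity
          calc ‖d‖ = ‖d‖ * μ⁻¹ * μ := by field_simp
            _ ≤ ‖d‖ * μ⁻¹ * ⟪u, a j⟫ := mul_le_mul_of_nonneg_left hμj h0
        rw [hexp j, ← hj, htdef]
        nlinarith [hda, hkey2]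
      · -- inactive constraint
        have hgap := hδle j hj
        have habs : t * ⟪u, a j⟫ ≤ ‖d‖ * μ⁻¹ := by
          have h1' : |⟪u, a j⟫| ≤ 1 := by
            have hcs := abs_real_inner_le_norm u (a j)
            rwa [ha j, hu, one_mul] at hcs
          calc t * ⟪u, a j⟫ ≤ |t * ⟪u, a j⟫| := le_abs_self _
            _ = |t| * |⟪u, a j⟫| := abs_mul _ _
            _ ≤ |t| * 1 := mul_le_mul_of_nonneg_left h1' (abs_nonneg _)
            _ = ‖d‖ * μ⁻¹ := by
                rw [mul_one, htdef, abs_neg, abs_of_nonneg (by positivity)]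
        have hlt : ‖d‖ * (1 + μ⁻¹) < δ := by
          calc ‖d‖ * (1 + μ⁻¹) < ε * (1 + μ⁻¹) := mul_lt_mul_of_pos_right hdn hfac
            _ = δ := hεδ
        rw [hexp j]
        have hsum : ⟪a j, d⟫ + t * ⟪u, a j⟫ < δ := by
          rw [mul_add, mul_one] at hlt
          linarith
        linarith
    have hpu : proj u u = 0 := by
      have huu : ⟪u, u⟫ = 1 := by rw [real_inner_self_eq_norm_sq, hu]; norm_num
      rw [proj_apply, huu, one_smul, sub_self]
    have hprojy : proj u y = proj u m + d := by
      rw [hydef, map_add, map_add, map_smul, hpu, smul_zero, add_zero, proj_of_orth u hd]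
    exact ⟨y, hyP, hprojy⟩
  -- the exposing functional must vanish on u^⊥
  obtain ⟨l, hl⟩ := hExp ⟨proj u m, Set.mem_image_of_mem _ hm⟩
  have hmmem : proj u m ∈ {x ∈ ⇑(proj u) '' P | ∀ y ∈ ⇑(proj u) '' P, l y ≤ l x} := by
    rw [← hl]
    exact Set.mem_image_of_mem _ hm
  have hmmax : ∀ y ∈ ⇑(proj u) '' P, l y ≤ l (proj u m) := hmmem.2
  have hsmall : ∀ d : E3, ⟪u, d⟫ = 0 → ‖d‖ < ε → l d ≤ 0 := by
    intro d hd hdn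
    have h' := hmmax _ (hmove d hd hdn)
    rw [map_add] at h'
    linarith
  have hl0 : ∀ d : E3, ⟪u, d⟫ = 0 → l d = 0 := by
    intro d hd
    rcases eq_or_ne d 0 with rfl | hd0
    · simp
    · have hdpos : 0 < ‖d‖ := norm_pos_iff.mpr hd0
      set s : ℝ := ε / (2 * ‖d‖) with hsdef
      have hs : 0 < s := by positivity
      have hsd : ‖s • d‖ < ε := by
        rw [norm_smul, Real.norm_eq_abs, abs_of_pos hs, hsdef]
        rw [div_mul_eq_mul_div, mul_comm]
        rw [div_lt_iff₀ (by positivity)]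
        nlinarith
      have hforth : ⟪u, s • d⟫ = 0 := by rw [real_inner_smul_right, hd, mul_zero]
      have hpos := hsmall (s • d) hforth hsd
      have hneg := hsmall (-(s • d)) (by rw [inner_neg_right, hforth, neg_zero])
        (by rwa [norm_neg])
      rw [map_smul, smul_eq_mul] at hpos
      rw [map_neg, map_smul, smul_eq_mul] at hneg
      have hz : s * l d = 0 := le_antisymm hpos (by linarith)
      rcases mul_eq_zero.mp hz with h | h
      · exact absurd h hs.ne'
      · exact h
  -- hence the shadow equals the projected edge
  have hPE : ⇑(proj u) '' P ⊆ ⇑(proj u) '' Ed := by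
    intro z hz
    rw [hl]
    refine ⟨hz, fun y hy => ?_⟩
    obtain ⟨x, _, rfl⟩ := hy
    obtain ⟨x', _, rfl⟩ := hz
    have e1 : ⟪u, proj u x - proj u x'⟫ = 0 := by
      rw [inner_sub_right, inner_proj u hu, inner_proj u hu, sub_self]
    have := hl0 _ e1
    rw [map_sub] at this
    linarith
  have heqset : ⇑(proj u) '' P = ⇑(proj u) '' Ed :=
    Set.Subset.antisymm hPE (Set.image_mono (by rw [hE]; intro x hx; exact hx.1.1))
  -- but the shadow is 2-dimensional
  obtain ⟨p, hpint⟩ := hint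
  obtain ⟨r, hr, hball⟩ := Metric.mem_nhds_iff.mp (mem_interior_iff_mem_nhds.mp hpint)
  have hpP : p ∈ P := hball (Metric.mem_ball_self hr)
  have hVsub : (ℝ ∙ u)ᗮ ≤ (affineSpan ℝ (⇑(proj u) '' Ed)).direction := by
    intro w hw
    have hwu : ⟪u, w⟫ = 0 := Submodule.mem_orthogonal_singleton_iff_inner_right.mp hw
    rcases eq_or_ne w 0 with rfl | hw0
    · exact Submodule.zero_mem _
    have hwpos : 0 < ‖w‖ := norm_pos_iff.mpr hw0
    set s : ℝ := r / (2 * ‖w‖) with hsdef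
    have hspos : 0 < s := by positivity
    have hmem : p + s • w ∈ P := by
      apply hball
      rw [Metric.mem_ball, dist_eq_norm, add_sub_cancel_left, norm_smul,
        Real.norm_eq_abs, abs_of_pos hspos, hsdef]
      rw [div_mul_eq_mul_div, mul_comm, div_lt_iff₀ (by positivity)]
      nlinarith
    have h1m : proj u (p + s • w) ∈ ⇑(proj u) '' Ed :=
      heqset ▸ Set.mem_image_of_mem _ hmem
    have h2m : proj u p ∈ ⇑(proj u) '' Ed :=
      heqset ▸ Set.mem_image_of_mem _ hpP
    have hdiff : proj u (p + s • w) -ᵥ proj u p ∈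
        (affineSpan ℝ (⇑(proj u) '' Ed)).direction :=
      AffineSubspace.vsub_mem_direction (subset_affineSpan ℝ _ h1m)
        (subset_affineSpan ℝ _ h2m)
    have hcalc : proj u (p + s • w) -ᵥ proj u p = s • w := by
      rw [vsub_eq_sub, map_add, add_sub_cancel_left, map_smul,
        proj_of_orth u hwu]
    rw [hcalc] at hdiff
    have := Submodule.smul_mem (affineSpan ℝ (⇑(proj u) '' Ed)).direction s⁻¹ hdiff
    rwa [inv_smul_smul₀ hspos.ne'] at this
  have hfin := Submodule.finrank_mono hVsub
  have hV2 : finrank ℝ ((ℝ ∙ u)ᗮ : Submodule ℝ E3) = 2 := by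
    have hune : u ≠ 0 := by
      intro h
      rw [h, norm_zero] at hu
      norm_num at hu
    have h3 := Submodule.finrank_add_finrank_orthogonal (K := (ℝ ∙ u : Submodule ℝ E3))
    rw [finrank_span_singleton hune, finrank_euclideanSpace_fin] at h3
    omega
  rw [hdim, hV2] at hfin
  omega

end Sil

/-- Silhouette criterion.  Let `P = ⋂ᵢ {x : ⟪aᵢ,x⟫ ≤ bᵢ}` be a convex polyhedron in
ℝ³ with nonempty interior, given by an irredundant representation with unit outward
normals `aᵢ` (each face `Fᵢ = P ∩ {⟪aᵢ,x⟫ = bᵢ}` is 2-dimensional).  Let `u` be a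
unit direction not orthogonal to any face normal (non-degenerate), and let
`E = F_{i₁} ∩ F_{i₂}` be an edge of `P` (1-dimensional), bounded by the faces with
outward normals `a i₁`, `a i₂`.  Then the orthogonal projection of `E` onto `u^⊥`
is an edge (1-dimensional exposed face) of the shadow polygon `π_u(P)` if and only
if `⟪u, a i₁⟫` and `⟪u, a i₂⟫` have opposite signs. -/
theorem stmt17 (n : ℕ) (a : Fin n → E3) (b : Fin n → ℝ) (ha : ∀ i, ‖a i‖ = 1)
    (P : Set E3) (hP : P = ⋂ i, {x | ⟪a i, x⟫ ≤ b i})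
    (hint : (interior P).Nonempty)
    (hfacet : ∀ i, Module.finrank ℝ
      (affineSpan ℝ (P ∩ {x | ⟪a i, x⟫ = b i})).direction = 2)
    (u : E3) (hu : ‖u‖ = 1) (hnd : ∀ i, ⟪u, a i⟫ ≠ 0)
    (i1 i2 : Fin n) (hne : i1 ≠ i2)
    (Ed : Set E3)
    (hE : Ed = (P ∩ {x | ⟪a i1, x⟫ = b i1}) ∩ (P ∩ {x | ⟪a i2, x⟫ = b i2}))
    (hEdim : Module.finrank ℝ (affineSpan ℝ Ed).direction = 1) :
    (IsExposed ℝ ((fun x => x - ⟪x, u⟫ • u) '' P) ((fun x => x - ⟪x, u⟫ • u) '' Ed) ∧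
      Module.finrank ℝ (affineSpan ℝ ((fun x => x - ⟪x, u⟫ • u) '' Ed)).direction = 1)
      ↔ ⟪u, a i1⟫ * ⟪u, a i2⟫ < 0 := by
  have hfun : (fun x : E3 => x - ⟪x, u⟫ • u) = ⇑(Sil.proj u) := rfl
  rw [hfun]
  constructor
  · rintro ⟨hExp, hdim⟩
    by_contra hpos
    have hne0 : ⟪u, a i1⟫ * ⟪u, a i2⟫ ≠ 0 := mul_ne_zero (hnd i1) (hnd i2)
    have hprod : 0 < ⟪u, a i1⟫ * ⟪u, a i2⟫ :=
      lt_of_le_of_ne (not_lt.mp hpos) (Ne.symm hne0)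
    rcases mul_pos_iff.mp hprod with ⟨ha1, ha2⟩ | ⟨ha1, ha2⟩
    · exact Sil.fw a b ha P hP hint hfacet u hu hnd i1 i2 ha1 ha2 Ed hE hEdim hExp hdim
    · have hmu : ‖(-u)‖ = 1 := by rwa [norm_neg]
      have hndm : ∀ i, ⟪-u, a i⟫ ≠ 0 := fun i => by
        rw [inner_neg_left]
        exact neg_ne_zero.mpr (hnd i)
      have hα : 0 < ⟪-u, a i1⟫ := by rw [inner_neg_left]; linarith
      have hβ : 0 < ⟪-u, a i2⟫ := by rw [inner_neg_left]; linarith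
      have hpe : Sil.proj (-u) = Sil.proj u := Sil.proj_neg u
      exact Sil.fw a b ha P hP hint hfacet (-u) hmu hndm i1 i2 hα hβ Ed hE hEdim
        (by rw [hpe]; exact hExp) (by rw [hpe]; exact hdim)
  · intro hprod
    rcases mul_neg_iff.mp hprod with ⟨hp1, hp2⟩ | ⟨hp1, hp2⟩
    · exact Sil.bk a b P hP u hu i1 i2 hp1 hp2 Ed hE hEdim
    · have hE2 : Ed = (P ∩ {x | ⟪a i2, x⟫ = b i2}) ∩ (P ∩ {x | ⟪a i1, x⟫ = b i1}) := by
        rw [hE, Set.inter_comm]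
      exact Sil.bk a b P hP u hu i2 i1 hp2 hp1 Ed hE2 hEdim
end
end
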